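/- For every prime p and positive integers k₁,...,k_r with (k₁,...,k_r) ≠ (1,...,1), for all sufficiently large p the non-star cyclic sum formula for finite multiple harmonic sums holds: ∑_{l=1}^{r} ∑_{m=1}^{k_l−1} H_p(m, k_{l+1},...,k_r, k₁,...,k_{l−1}, k_l−m+1) ≡ ∑_{l=1}^{r} ( H_p(k_{l+1},...,k_r,k₁,...,k_{l−1},k_l+1) + H_p(k_{l+1}+1,k_{l+2},...,k_r,k₁,...,k_l) + H_p(1,k_{l+1},...,k_r,k₁,...,k_l) ) (mod p). -/

import Mathlib

/-!
For a word `w = (k₁, …, k_r)` put `G w = ∑_{0<n₁<⋯<n_r<x<p} ∏ nᵢ^{-kᵢ} / (x - n₁)`, which is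
`gapSum p (w ++ [0])`. For `w = k :: t` the partial fraction expansion
`c⁻ᵏ/(x - c) = ∑_{m=1}^{k} c⁻ᵐ x^{-(k-m+1)} + x⁻ᵏ/(x - c)` moves the exponent of `n₁` onto `x`: it
produces the terms `H(m, t, k - m + 1)` and a sum in which `n₁` carries no weight. Summing `n₁` out
leaves `∑_{0<c<n₂} 1/(x - c)`, a window of the harmonic sum; the reflection `n ↦ p - n` together with
`∑_{0<n<p} 1/n = 0` (for `p > 2`) rewrites it as `∑_{x<y<p} 1/(y - n₂)` minus four harmonic pieces.
With `w' = t ++ [k]` this reads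
`G w = ∑_{m=1}^{k} H(m, t, k-m+1) + G w' - H(1, w') - H(w'₁ + 1, w'₂, …) - H(w', 1) - H(t, k + 1)`.
The term `m = k` is `H(w, 1)`, so `G w - H(w, 1)` changes by one summand of the cyclic sum formula
under each rotation, and these changes telescope around the cycle.
-/

/-- Multiple harmonic sum with strict inequalities, with lower bound `a`:
`MHS p (k₁ :: … :: k_r) a = ∑_{a < n₁ < … < n_r < p} ∏ nᵢ^{-kᵢ}` in `ZMod p`. -/
def MHS (p : ℕ) : List ℕ → ℕ → ZMod p
  | [], _ => 1
  | k :: ks, a => ∑ n ∈ Finset.Ioo a p, ((n : ZMod p))⁻¹ ^ k * MHS p ks n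

/-- `Hp p [k₁,…,k_r] = ∑_{0 < n₁ < … < n_r < p} ∏ nᵢ^{-kᵢ}` in `ZMod p`. -/
def Hp (p : ℕ) (ks : List ℕ) : ZMod p := MHS p ks 0


open Finset

/-- `chainSum p g [k₁, …, k_r] a = ∑_{a < n₁ < … < n_r < p} ∏ nᵢ^{-kᵢ} · g n_r`, read as `g a`
for the empty word. -/
def chainSum (p : ℕ) (g : ℕ → ZMod p) : List ℕ → ℕ → ZMod p
  | [], a => g a
  | k :: ks, a => ∑ n ∈ Ioo a p, (n : ZMod p)⁻¹ ^ k * chainSum p g ks n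

/-- `edgeSum p φ [k₁, …, k_r] = ∑_{0 < n₁ < … < n_r < p} ∏ nᵢ^{-kᵢ} · φ n₁ n_r`. -/
def edgeSum (p : ℕ) (φ : ℕ → ℕ → ZMod p) : List ℕ → ZMod p
  | [] => 0
  | k :: ks => ∑ c ∈ Ioo 0 p, (c : ZMod p)⁻¹ ^ k * chainSum p (φ c) ks c

/-- `gapSum p [k₁, …, k_r] = ∑_{0 < n₁ < … < n_r < p} ∏ nᵢ^{-kᵢ} / (n_r - n₁)`. -/
def gapSum (p : ℕ) (ks : List ℕ) : ZMod p :=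
  edgeSum p (fun v u => ((u - v : ℕ) : ZMod p)⁻¹) ks

section ChainSum

variable {p : ℕ}

theorem MHS_eq_chainSum (ks : List ℕ) (a : ℕ) : MHS p ks a = chainSum p (fun _ => 1) ks a := by
  induction ks generalizing a with
  | nil => rfl
  | cons k ks ih => simp only [MHS, chainSum, ih]

theorem chainSum_congr {g g' : ℕ → ZMod p} (ks : List ℕ) {a : ℕ} (ha : a < p)
    (h : ∀ n, a ≤ n → n < p → g n = g' n) : chainSum p g ks a = chainSum p g' ks a := by
  induction ks generalizing a with
  | nil => exact h a le_rfl ha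
  | cons k ks ih =>
    refine sum_congr rfl fun n hn => ?_
    rw [mem_Ioo] at hn
    rw [ih hn.2 fun m hnm hm => h m (hn.1.le.trans hnm) hm]

theorem chainSum_add (g g' : ℕ → ZMod p) (ks : List ℕ) (a : ℕ) :
    chainSum p (fun n => g n + g' n) ks a = chainSum p g ks a + chainSum p g' ks a := by
  induction ks generalizing a with
  | nil => rfl
  | cons k ks ih => simp only [chainSum, ih, mul_add, sum_add_distrib]

theorem chainSum_const_mul (x : ZMod p) (g : ℕ → ZMod p) (ks : List ℕ) (a : ℕ) :
    chainSum p (fun n => x * g n) ks a = x * chainSum p g ks a := by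
  induction ks generalizing a with
  | nil => rfl
  | cons k ks ih =>
    simp only [chainSum, ih, mul_sum]
    exact sum_congr rfl fun n _ => mul_left_comm _ _ _

theorem chainSum_sum {ι : Type*} (s : Finset ι) (g : ι → ℕ → ZMod p) (ks : List ℕ) (a : ℕ) :
    chainSum p (fun n => ∑ i ∈ s, g i n) ks a = ∑ i ∈ s, chainSum p (g i) ks a := by
  induction ks generalizing a with
  | nil => rfl
  | cons k ks ih =>
    simp only [chainSum, ih, mul_sum]
    exact sum_comm

theorem chainSum_append (g : ℕ → ZMod p) (ks ks' : List ℕ) (a : ℕ) :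
    chainSum p g (ks ++ ks') a = chainSum p (chainSum p g ks') ks a := by
  induction ks generalizing a with
  | nil => rfl
  | cons k ks ih => simp only [List.cons_append, chainSum, ih]

end ChainSum

section EdgeSum

variable {p : ℕ}

theorem edgeSum_congr {φ ψ : ℕ → ℕ → ZMod p} (ks : List ℕ)
    (h : ∀ v u, 0 < v → v ≤ u → u < p → φ v u = ψ v u) : edgeSum p φ ks = edgeSum p ψ ks := by
  cases ks with
  | nil => rfl
  | cons k ks =>
    refine sum_congr rfl fun c hc => ?_
    rw [mem_Ioo] at hc
    rw [chainSum_congr ks hc.2 fun u hcu hu => h c u hc.1 hcu hu]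

theorem edgeSum_add (φ ψ : ℕ → ℕ → ZMod p) (ks : List ℕ) :
    edgeSum p (fun v u => φ v u + ψ v u) ks = edgeSum p φ ks + edgeSum p ψ ks := by
  cases ks with
  | nil => simp [edgeSum]
  | cons k ks => simp only [edgeSum, chainSum_add, mul_add, sum_add_distrib]

theorem edgeSum_sum {ι : Type*} (s : Finset ι) (φ : ι → ℕ → ℕ → ZMod p) (ks : List ℕ) :
    edgeSum p (fun v u => ∑ i ∈ s, φ i v u) ks = ∑ i ∈ s, edgeSum p (φ i) ks := by
  cases ks with
  | nil => simp [edgeSum]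
  | cons k ks =>
    simp only [edgeSum, chainSum_sum, mul_sum]
    exact sum_comm

theorem edgeSum_eq_chainSum {ks : List ℕ} (hks : ks ≠ []) (g : ℕ → ZMod p) :
    edgeSum p (fun _ u => g u) ks = chainSum p g ks 0 := by
  obtain ⟨k, ks, rfl⟩ := List.exists_cons_of_ne_nil hks
  rfl

theorem edgeSum_cons (k : ℕ) {ks : List ℕ} (hks : ks ≠ []) (φ : ℕ → ℕ → ZMod p) :
    edgeSum p φ (k :: ks)
      = edgeSum p (fun v u => ∑ c ∈ Ioo 0 v, (c : ZMod p)⁻¹ ^ k * φ c u) ks := by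
  obtain ⟨a, ks, rfl⟩ := List.exists_cons_of_ne_nil hks
  simp only [edgeSum, chainSum, chainSum_sum, chainSum_const_mul, mul_sum]
  refine sum_comm' (fun c v => ?_) |>.trans (sum_congr rfl fun v _ => sum_congr rfl fun c _ => ?_)
  · simp only [mem_Ioo]
    omega
  · ring

theorem edgeSum_append {ks : List ℕ} (hks : ks ≠ []) (k : ℕ) (φ : ℕ → ℕ → ZMod p) :
    edgeSum p φ (ks ++ [k])
      = edgeSum p (fun v u => ∑ x ∈ Ioo u p, (x : ZMod p)⁻¹ ^ k * φ v x) ks := by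
  obtain ⟨a, ks, rfl⟩ := List.exists_cons_of_ne_nil hks
  simp only [List.cons_append, edgeSum, chainSum_append]
  rfl

theorem edgeSum_cons_append (m : ℕ) (ks : List ℕ) (n : ℕ) (φ : ℕ → ℕ → ZMod p) :
    edgeSum p φ (m :: (ks ++ [n])) = edgeSum p
      (fun v u => ∑ x ∈ Ioo u p, (v : ZMod p)⁻¹ ^ m * (x : ZMod p)⁻¹ ^ n * φ v x) (0 :: ks) := by
  simp only [edgeSum, chainSum_append, pow_zero, one_mul]
  refine sum_congr rfl fun c _ => ?_
  rw [← chainSum_const_mul]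
  simp only [chainSum, mul_sum, mul_assoc]

end EdgeSum

section MultipleHarmonicSums

variable {p : ℕ}

theorem Hp_eq_edgeSum {ks : List ℕ} (hks : ks ≠ []) : Hp p ks = edgeSum p (fun _ _ => 1) ks := by
  rw [Hp, MHS_eq_chainSum, edgeSum_eq_chainSum hks]

theorem Hp_one_cons {ks : List ℕ} (hks : ks ≠ []) :
    Hp p (1 :: ks) = edgeSum p (fun v _ => ∑ c ∈ Ioo 0 v, (c : ZMod p)⁻¹) ks := by
  simp only [Hp_eq_edgeSum (List.cons_ne_nil _ _), edgeSum_cons 1 hks, pow_one, mul_one]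

theorem Hp_append_one {ks : List ℕ} (hks : ks ≠ []) :
    Hp p (ks ++ [1]) = edgeSum p (fun _ u => ∑ x ∈ Ioo u p, (x : ZMod p)⁻¹) ks := by
  simp only [Hp_eq_edgeSum (List.append_ne_nil_of_right_ne_nil _ (List.cons_ne_nil _ _)),
    edgeSum_append hks, pow_one, mul_one]

theorem Hp_succ_headI_cons_tail {ks : List ℕ} (hks : ks ≠ []) :
    Hp p ((ks.headI + 1) :: ks.tail) = edgeSum p (fun v _ => (v : ZMod p)⁻¹) ks := by
  obtain ⟨k, ks, rfl⟩ := List.exists_cons_of_ne_nil hks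
  simp only [Hp, MHS, edgeSum, List.headI_cons, List.tail_cons, MHS_eq_chainSum]
  refine sum_congr rfl fun c _ => ?_
  have h := chainSum_const_mul (c : ZMod p)⁻¹ (fun _ => 1) ks c
  simp only [mul_one] at h
  rw [h, pow_succ, mul_assoc]

theorem Hp_append_succ (ks : List ℕ) (k : ℕ) :
    Hp p (ks ++ [k + 1]) = edgeSum p (fun _ u => (u : ZMod p)⁻¹) (ks ++ [k]) := by
  rw [edgeSum_eq_chainSum (List.append_ne_nil_of_right_ne_nil _ (List.cons_ne_nil _ _)), Hp,
    MHS_eq_chainSum, chainSum_append, chainSum_append]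
  simp only [chainSum, pow_succ, mul_one]

end MultipleHarmonicSums

theorem sum_Ioo_eq_sub {M : Type*} [AddCommGroup M] (f : ℕ → M) {a b : ℕ} (h : a < b) :
    ∑ n ∈ Ioo a b, f n = ∑ n ∈ range b, f n - ∑ n ∈ range (a + 1), f n := by
  rw [← Ico_add_one_left_eq_Ioo, sum_Ico_eq_sub f (m := a + 1) h]

theorem inv_pow_mul_inv_sub {K : Type*} [Field K] {a b : K} (ha : a ≠ 0) (hb : b ≠ 0)
    (hab : a ≠ b) (k : ℕ) :
    a⁻¹ ^ k * (b - a)⁻¹ = ∑ m ∈ Icc 1 k, a⁻¹ ^ m * b⁻¹ ^ (k - m + 1) + b⁻¹ ^ k * (b - a)⁻¹ := by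
  induction k with
  | zero => simp
  | succ k ih =>
    have hba : b - a ≠ 0 := sub_ne_zero.mpr hab.symm
    have key : (a⁻¹ - b⁻¹) * (b - a)⁻¹ = a⁻¹ * b⁻¹ := by
      field_simp
    have hsum : ∑ m ∈ Icc 1 k, a⁻¹ ^ m * b⁻¹ ^ (k + 1 - m + 1)
        = b⁻¹ * ∑ m ∈ Icc 1 k, a⁻¹ ^ m * b⁻¹ ^ (k - m + 1) := by
      rw [mul_sum]
      refine sum_congr rfl fun m hm => ?_
      rw [mem_Icc] at hm
      rw [show k + 1 - m + 1 = k - m + 1 + 1 by omega, pow_succ]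
      ring
    rw [sum_Icc_succ_top (by omega), hsum, Nat.sub_self]
    linear_combination b⁻¹ * ih + a⁻¹ ^ k * key

theorem natCast_ne_zero_of_lt {p n : ℕ} (h₀ : 0 < n) (h : n < p) : (n : ZMod p) ≠ 0 := by
  rw [Ne, ZMod.natCast_eq_zero_iff]
  exact fun hd => absurd (Nat.le_of_dvd h₀ hd) (not_le.mpr h)

section Harmonic

variable {p : ℕ} [Fact p.Prime]

theorem sum_Ioo_inv_reflect {m : ℕ} (hm : m ≤ p) :
    ∑ n ∈ Ioo 0 (p - m), (n : ZMod p)⁻¹ = -∑ n ∈ Ioo m p, (n : ZMod p)⁻¹ := by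
  rw [← sum_neg_distrib]
  refine sum_nbij' (fun n => p - n) (fun n => p - n) ?_ ?_ ?_ ?_ ?_ <;>
    intro n hn <;> simp only [mem_Ioo] at hn ⊢
  · omega
  · omega
  · omega
  · omega
  · rw [Nat.cast_sub (by omega), ZMod.natCast_self, zero_sub, inv_neg, neg_neg]

theorem sum_range_inv_eq_zero (hp : 2 < p) : ∑ n ∈ range p, (n : ZMod p)⁻¹ = 0 := by
  have h := sum_Ioo_inv_reflect (p := p) (m := 0) (Nat.zero_le p)
  rw [Nat.sub_zero, sum_Ioo_eq_sub _ (Nat.pos_of_ne_zero (NeZero.ne p))] at h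
  have h2 : (2 : ZMod p) ≠ 0 := by exact_mod_cast natCast_ne_zero_of_lt two_pos hp
  simpa [h2] using (show (2 : ZMod p) * ∑ n ∈ range p, (n : ZMod p)⁻¹ = 0 by
    linear_combination h)

theorem sum_Ioo_inv_shift (hp : 2 < p) {v u : ℕ} (hv : 0 < v) (hvu : v ≤ u) (hu : u < p) :
    ∑ c ∈ Ioo 0 v, ((u - c : ℕ) : ZMod p)⁻¹ + ∑ c ∈ Ioo 0 v, (c : ZMod p)⁻¹ + (v : ZMod p)⁻¹
      + ∑ x ∈ Ioo u p, (x : ZMod p)⁻¹ + (u : ZMod p)⁻¹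
      = ∑ x ∈ Ioo u p, ((x - v : ℕ) : ZMod p)⁻¹ := by
  have hleft : ∑ c ∈ Ioo 0 v, ((u - c : ℕ) : ZMod p)⁻¹ = ∑ n ∈ Ioo (u - v) u, (n : ZMod p)⁻¹ :=
    sum_nbij' (fun c => u - c) (fun n => u - n) (by intro; simp only [mem_Ioo]; omega)
      (by intro; simp only [mem_Ioo]; omega) (by intro; simp only [mem_Ioo]; omega)
      (by intro; simp only [mem_Ioo]; omega) (fun _ _ => rfl)
  have hright :
      ∑ x ∈ Ioo u p, ((x - v : ℕ) : ZMod p)⁻¹ = ∑ n ∈ Ioo (u - v) (p - v), (n : ZMod p)⁻¹ :=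
    sum_nbij' (fun x => x - v) (fun n => n + v) (by intro; simp only [mem_Ioo]; omega)
      (by intro; simp only [mem_Ioo]; omega) (by intro; simp only [mem_Ioo]; omega)
      (by intro; simp only [mem_Ioo]; omega) (fun _ _ => rfl)
  have hrefl := sum_Ioo_inv_reflect (p := p) (hvu.trans hu.le)
  rw [sum_Ioo_eq_sub _ (by omega), sum_Ioo_eq_sub _ (by omega)] at hrefl
  rw [hleft, hright, sum_Ioo_eq_sub _ (by omega), sum_Ioo_eq_sub _ hv, sum_Ioo_eq_sub _ hu,
    sum_Ioo_eq_sub _ (by omega)]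
  have hv₁ := sum_range_succ (fun n => (n : ZMod p)⁻¹) v
  have hu₁ := sum_range_succ (fun n => (n : ZMod p)⁻¹) u
  have h₁ : ∑ n ∈ range (0 + 1), (n : ZMod p)⁻¹ = 0 := by simp
  linear_combination -hrefl - hv₁ - hu₁ - 2 * h₁ + 2 * sum_range_inv_eq_zero hp

end Harmonic

section CyclicSum

variable {p : ℕ} [Fact p.Prime]

theorem gapSum_cons_append_zero (k : ℕ) (ks : List ℕ) :
    gapSum p (k :: (ks ++ [0]))
      = ∑ m ∈ Icc 1 k, Hp p (m :: (ks ++ [k - m + 1])) + gapSum p (0 :: (ks ++ [k])) := by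
  simp only [gapSum, Hp_eq_edgeSum (List.cons_ne_nil _ _), edgeSum_cons_append]
  rw [← edgeSum_sum, ← edgeSum_add]
  refine edgeSum_congr _ fun v u hv hvu hu => ?_
  rw [sum_comm, ← sum_add_distrib]
  refine sum_congr rfl fun x hx => ?_
  rw [mem_Ioo] at hx
  have hvx : v < x := hvu.trans_lt hx.1
  have hvx' : (v : ZMod p) ≠ x := fun h => natCast_ne_zero_of_lt (p := p)
    (Nat.sub_pos_of_lt hvx) (by omega) (by rw [Nat.cast_sub hvx.le, h, sub_self])
  simp only [pow_zero, mul_one, one_mul]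
  rw [Nat.cast_sub hvx.le, inv_pow_mul_inv_sub (natCast_ne_zero_of_lt hv (hvx.trans hx.2))
    (natCast_ne_zero_of_lt (hv.trans hvx) hx.2) hvx' k]

theorem gapSum_append_zero (hp : 2 < p) (ks : List ℕ) (k : ℕ) :
    gapSum p (ks ++ [k] ++ [0])
      = gapSum p (0 :: (ks ++ [k])) + Hp p (1 :: (ks ++ [k]))
        + Hp p (((ks ++ [k]).headI + 1) :: (ks ++ [k]).tail) + Hp p (ks ++ [k] ++ [1])
        + Hp p (ks ++ [k + 1]) := by
  have hne : ks ++ [k] ≠ [] := List.append_ne_nil_of_right_ne_nil _ (List.cons_ne_nil _ _)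
  rw [gapSum, gapSum, edgeSum_cons 0 hne, edgeSum_append hne, Hp_one_cons hne,
    Hp_succ_headI_cons_tail hne, Hp_append_one hne, Hp_append_succ, ← edgeSum_add, ← edgeSum_add,
    ← edgeSum_add, ← edgeSum_add]
  refine edgeSum_congr _ fun v u hv hvu hu => ?_
  simp only [pow_zero, one_mul]
  exact (sum_Ioo_inv_shift hp hv hvu hu).symm

theorem sum_Hp_cyclic_step (hp : 2 < p) {k : ℕ} (hk : 1 ≤ k) (ks : List ℕ) :
    ∑ m ∈ Icc 1 (k - 1), Hp p (m :: (ks ++ [k - m + 1]))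
      = Hp p (ks ++ [k + 1]) + Hp p (((ks ++ [k]).headI + 1) :: (ks ++ [k]).tail)
        + Hp p (1 :: (ks ++ [k]))
        + ((gapSum p ((k :: ks) ++ [0]) - Hp p ((k :: ks) ++ [1]))
          - (gapSum p (ks ++ [k] ++ [0]) - Hp p (ks ++ [k] ++ [1]))) := by
  obtain ⟨j, rfl⟩ := Nat.exists_eq_add_of_le' hk
  have hpf := gapSum_cons_append_zero (p := p) (j + 1) ks
  rw [sum_Icc_succ_top (by omega), Nat.sub_self, zero_add] at hpf
  simp only [Nat.add_sub_cancel, List.cons_append]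
  linear_combination gapSum_append_zero hp ks (j + 1) - hpf

end CyclicSum

theorem List.exists_rotate_eq_getElem_cons {α : Type*} {l : List α} {n : ℕ} (h : n < l.length) :
    ∃ s, l.rotate n = l[n] :: s ∧ l.rotate (n + 1) = s ++ [l[n]] := by
  refine ⟨l.drop (n + 1) ++ l.take n, ?_, ?_⟩
  · rw [rotate_eq_drop_append_take h.le, drop_eq_getElem_cons h, cons_append]
  · rw [rotate_eq_drop_append_take h, ← take_concat_get' l n h, append_assoc]

theorem cyclic_sum_formula_general
    (ks : List ℕ) (hpos : ∀ k ∈ ks, 1 ≤ k) :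
    ∃ N : ℕ, ∀ p : ℕ, p.Prime → N < p →
      ∑ l ∈ Finset.range ks.length, ∑ m ∈ Finset.Icc 1 (ks.getD l 1 - 1),
          Hp p (m :: ((ks.rotate (l + 1)).dropLast ++ [ks.getD l 1 - m + 1]))
        = ∑ l ∈ Finset.range ks.length,
            (Hp p ((ks.rotate (l + 1)).dropLast ++ [ks.getD l 1 + 1])
              + Hp p (((ks.rotate (l + 1)).headI + 1) :: (ks.rotate (l + 1)).tail)
              + Hp p (1 :: ks.rotate (l + 1))) := by
  refine ⟨2, fun p hp hp2 => ?_⟩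
  have := Fact.mk hp
  let Φ : ℕ → ZMod p := fun l => gapSum p (ks.rotate l ++ [0]) - Hp p (ks.rotate l ++ [1])
  have step : ∀ l ∈ range ks.length,
      ∑ m ∈ Icc 1 (ks.getD l 1 - 1),
          Hp p (m :: ((ks.rotate (l + 1)).dropLast ++ [ks.getD l 1 - m + 1]))
        = Hp p ((ks.rotate (l + 1)).dropLast ++ [ks.getD l 1 + 1])
          + Hp p (((ks.rotate (l + 1)).headI + 1) :: (ks.rotate (l + 1)).tail)
          + Hp p (1 :: ks.rotate (l + 1)) + (Φ l - Φ (l + 1)) := by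
    intro l hl
    rw [mem_range] at hl
    obtain ⟨s, h₀, h₁⟩ := List.exists_rotate_eq_getElem_cons hl
    simp only [Φ, h₀, h₁, List.getD_eq_getElem _ _ hl, List.dropLast_concat]
    exact sum_Hp_cyclic_step hp2 (hpos _ (List.getElem_mem hl)) s
  rw [sum_congr rfl step, sum_add_distrib, sum_range_sub']
  simp [Φ]

theorem cyclic_sum_formula
    (ks : List ℕ) (hne : ks ≠ []) (hpos : ∀ k ∈ ks, 1 ≤ k)
    (hnotall1 : ¬ ∀ k ∈ ks, k = 1) :
    ∃ N : ℕ, ∀ p : ℕ, p.Prime → N < p →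
      ∑ l ∈ Finset.range ks.length, ∑ m ∈ Finset.Icc 1 (ks.getD l 1 - 1),
          Hp p (m :: ((ks.rotate (l + 1)).dropLast ++ [ks.getD l 1 - m + 1]))
        = ∑ l ∈ Finset.range ks.length,
            (Hp p ((ks.rotate (l + 1)).dropLast ++ [ks.getD l 1 + 1])
              + Hp p (((ks.rotate (l + 1)).headI + 1) :: (ks.rotate (l + 1)).tail)
              + Hp p (1 :: ks.rotate (l + 1))) :=
  cyclic_sum_formula_general ks hpos
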